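/- The modality □• satisfies Löb's Logic GL over CHL: for all formulas φ, ψ, (L1) if CHL ⊢ φ then CHL ⊢ □•φ; (L2) CHL ⊢ □•(φ→ψ) → (□•φ → □•ψ); (L3) CHL ⊢ □•φ → □•□•φ; (L4) CHL ⊢ □•(□•φ → φ) → □•φ. -/
import Mathlib


/-!
Cyclic syntax for Cyclic Henkin Logic (Visser, "Cyclic Henkin Logic").

A graph is a directed pointed labeled graph with ordered successors;
formulas of the cyclic modal language `𝕃°` are such graphs over the
modal labels, whose box-occurrences guard all cycles.
-/


theorem finite_option {α : Type} (h : Finite α) : Finite (Option α) := by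
  haveI := h
  haveI : Fintype α := Fintype.ofFinite _
  exact Finite.of_fintype _

/-- Directed pointed labeled graphs with ordered successors over a label
set `L` with arity function `ar`.  The vertex set is finite. -/
structure RGraph (L : Type) (ar : L → ℕ) : Type 1 where
  V : Type
  fin : Finite V
  root : V
  label : V → L
  succ : (a : V) → Fin (ar (label a)) → V

namespace RGraph

variable {L : Type} {ar : L → ℕ}

/-- The edge relation `a Ŝ b`. -/
def Edge (G : RGraph L ar) (a b : G.V) : Prop := ∃ i, G.succ a i = b

/-- Every vertex is reachable from the root by a finite path. -/
def Reachable (G : RGraph L ar) : Prop :=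
  ∀ a, Relation.ReflTransGen G.Edge G.root a

/-- `C` is a cycle: its elements can be arranged in a closed path of
pairwise distinct vertices. -/
def IsCycle (G : RGraph L ar) (C : Set G.V) : Prop :=
  ∃ (k : ℕ) (f : Fin (k + 1) → G.V), Function.Injective f ∧ Set.range f = C ∧
    (∀ i : Fin k, G.Edge (f i.castSucc) (f i.succ)) ∧ G.Edge (f (Fin.last k)) (f 0)

/-- A guard: a set of vertices meeting every cycle. -/
def IsGuard (G : RGraph L ar) (W : Set G.V) : Prop :=
  ∀ C, G.IsCycle C → (C ∩ W).Nonempty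

/-- The number of cycles `c(G)`. -/
noncomputable def numCycles (G : RGraph L ar) : ℕ :=
  Set.ncard {C : Set G.V | G.IsCycle C}

/-- A vertex on a cycle. -/
def OnCycle (G : RGraph L ar) (a : G.V) : Prop := ∃ C, G.IsCycle C ∧ a ∈ C

/-- The root is a cycle vertex. -/
def RootOnCycle (G : RGraph L ar) : Prop := G.OnCycle G.root

/-- Acyclic graphs. -/
def Acyclic (G : RGraph L ar) : Prop := ∀ C, ¬ G.IsCycle C

/-- Bisimulations between graphs. -/
def IsBisim (G G' : RGraph L ar) (R : G.V → G'.V → Prop) : Prop :=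
  ∀ a a', R a a' → ∃ h : G.label a = G'.label a',
    ∀ i : Fin (ar (G.label a)),
      R (G.succ a i) (G'.succ a' (Fin.cast (congrArg ar h) i))

/-- Bisimilarity `G ≃ G'`: some bisimulation relates the roots. -/
def Bisim (G G' : RGraph L ar) : Prop :=
  ∃ R, G.IsBisim G' R ∧ R G.root G'.root

/-- Isomorphism `G ≅ G'`: a bijective bisimulation relating the roots. -/
def Iso (G G' : RGraph L ar) : Prop :=
  ∃ e : G.V ≃ G'.V, G.IsBisim G' (fun a b => e a = b) ∧ e G.root = G'.root

end RGraph

/-- Labels for the cyclic modal language `𝕃°`. -/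
inductive FLab : Type
  | top | bot | var (n : ℕ) | neg | box | and | or | imp
deriving DecidableEq

/-- Arities of the labels. -/
@[reducible] def FLab.ar : FLab → ℕ
  | .top => 0 | .bot => 0 | .var _ => 0
  | .neg => 1 | .box => 1
  | .and => 2 | .or => 2 | .imp => 2

/-- Raw formulas of `𝕃°`: graphs over the modal labels. -/
abbrev Fm := RGraph FLab FLab.ar

namespace Fm

/-- `p` occurs in `φ`. -/
def Occurs (φ : Fm) (p : ℕ) : Prop := ∃ a, φ.label a = .var p

/-- The set `bo(φ)` of box-occurrences. -/
def boOcc (φ : Fm) : Set φ.V := {a | φ.label a = .box}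

/-- The guard condition: every cycle contains a box-occurrence. -/
def Guarded (φ : Fm) : Prop := φ.IsGuard φ.boOcc

/-- `φ` is a formula: a (rooted, reachable) graph whose box-occurrences
form a guard. -/
def WF (φ : Fm) : Prop := φ.Reachable ∧ φ.Guarded

/-- An edge leaving a non-box vertex. -/
def EdgeNB (φ : Fm) (a b : φ.V) : Prop := φ.Edge a b ∧ φ.label a ≠ .box

/-- `φ` is modalised in `p`: every path from the root to a `p`-occurrence
passes through a box-occurrence. -/
def Modalised (φ : Fm) (p : ℕ) : Prop :=
  ∀ a, Relation.ReflTransGen φ.EdgeNB φ.root a → φ.label a ≠ .var p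

theorem Modalised.root_ne {φ : Fm} {p : ℕ} (h : φ.Modalised p) :
    φ.label φ.root ≠ .var p :=
  h φ.root Relation.ReflTransGen.refl

/-! ### Operations on formulas -/

/-- One-point graph with a 0-ary label. -/
def ofLab0 (l : FLab) : Fm where
  V := PUnit
  fin := inferInstance
  root := .unit
  label := fun _ => l
  succ := fun _ _ => .unit

def topFm : Fm := ofLab0 .top
def botFm : Fm := ofLab0 .bot
def varFm (n : ℕ) : Fm := ofLab0 (.var n)

def lab1 (l : FLab) (φ : Fm) : Option φ.V → FLab
  | none => l
  | some a => φ.label a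

/-- Add a fresh root with 1-ary label `l` above `φ`. -/
def ofLab1 (l : FLab) (φ : Fm) : Fm where
  V := Option φ.V
  fin := finite_option φ.fin
  root := none
  label := lab1 l φ
  succ := fun a => match a with
    | none => fun _ => some φ.root
    | some b => fun i => some (φ.succ b i)

def neg (φ : Fm) : Fm := ofLab1 .neg φ
def box (φ : Fm) : Fm := ofLab1 .box φ

def lab2 (l : FLab) (φ ψ : Fm) : Option (φ.V ⊕ ψ.V) → FLab
  | none => l
  | some (.inl a) => φ.label a
  | some (.inr b) => ψ.label b

/-- Add a fresh root with 2-ary label `l` above the disjoint sum of `φ`, `ψ`. -/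
def ofLab2 (l : FLab) (φ ψ : Fm) : Fm where
  V := Option (φ.V ⊕ ψ.V)
  fin := finite_option (by haveI := φ.fin; haveI := ψ.fin; exact inferInstance)
  root := none
  label := lab2 l φ ψ
  succ := fun a => match a with
    | none => fun i => if (i : ℕ) = 0 then some (.inl φ.root) else some (.inr ψ.root)
    | some (.inl a) => fun i => some (.inl (φ.succ a i))
    | some (.inr b) => fun i => some (.inr (ψ.succ b i))

def and (φ ψ : Fm) : Fm := ofLab2 .and φ ψ
def or (φ ψ : Fm) : Fm := ofLab2 .or φ ψ
def imp (φ ψ : Fm) : Fm := ofLab2 .imp φ ψ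

/-- `φ ↔ ψ` as `(φ→ψ) ∧ (ψ→φ)`. -/
def iff (φ ψ : Fm) : Fm := Fm.and (Fm.imp φ ψ) (Fm.imp ψ φ)

/-- The fixed point `Ϝp.φ`: identify the root with all `p`-occurrences,
keeping the label of the root.  (The root is not a `p`-occurrence, e.g.
because `φ` is modalised in `p`.) -/
def fix (φ : Fm) (p : ℕ) (h : φ.label φ.root ≠ .var p) : Fm where
  V := {a : φ.V // φ.label a ≠ .var p}
  fin := by haveI := φ.fin; exact inferInstance
  root := ⟨φ.root, h⟩
  label := fun a => φ.label a.1
  succ := fun a i =>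
    if hb : φ.label (φ.succ a.1 i) = .var p then ⟨φ.root, h⟩
    else ⟨φ.succ a.1 i, hb⟩

/-! ### Substitution -/

def varIdx : FLab → Option ℕ
  | .var q => some q
  | _ => none

/-- The copy of `σ q` hanging at a `q`-occurrence. -/
def copyT (σ : ℕ → Fm) : Option ℕ → Type
  | some q => (σ q).V
  | none => PUnit

theorem copyT_finite (σ : ℕ → Fm) : ∀ o, Finite (copyT σ o)
  | some q => (σ q).fin
  | none => show Finite PUnit from inferInstance

def copyRoot (σ : ℕ → Fm) : ∀ o, copyT σ o
  | some q => (σ q).root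
  | none => .unit

def copyLabel (σ : ℕ → Fm) (d : FLab) : ∀ o, copyT σ o → FLab
  | some q, b => (σ q).label b
  | none, _ => d

/-- Vertices of the substitution `φσ`. -/
def SubV (φ : Fm) (σ : ℕ → Fm) : Type :=
  Σ a : φ.V, copyT σ (varIdx (φ.label a))

def substSucc (φ : Fm) (σ : ℕ → Fm) (a : φ.V) :
    ∀ (o : Option ℕ), o = varIdx (φ.label a) → ∀ b : copyT σ o,
      Fin (copyLabel σ (φ.label a) o b).ar → SubV φ σ
  | some q, h, b, i => ⟨a, cast (congrArg (copyT σ) h) ((σ q).succ b i)⟩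
  | none, _, _, i => ⟨φ.succ a i, copyRoot σ _⟩

/-- Simultaneous substitution: every `q`-occurrence of `φ` is identified
with the root of a disjoint copy of `σ q`, keeping the label of the root
of `σ q`. -/
def subst (φ : Fm) (σ : ℕ → Fm) : Fm where
  V := SubV φ σ
  fin := by
    haveI := φ.fin
    haveI : ∀ a : φ.V, Finite (copyT σ (varIdx (φ.label a))) :=
      fun a => copyT_finite σ _
    exact (inferInstance : Finite (Σ a : φ.V, copyT σ (varIdx (φ.label a))))
  root := ⟨φ.root, copyRoot σ _⟩
  label := fun x => copyLabel σ (φ.label x.1) _ x.2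
  succ := fun x => substSucc φ σ x.1 _ rfl x.2

/-- Substitution of a single variable, `φ[p:ψ]`. -/
def subst1 (φ : Fm) (p : ℕ) (ψ : Fm) : Fm :=
  φ.subst (fun q => if q = p then ψ else varFm q)

/-! ### Snip -/

-- Redirect all incoming edges of the root to a new leaf labeled `p`.
open Classical in
noncomputable def snipC (φ : Fm) (p : ℕ) : Fm where
  V := Option φ.V
  fin := finite_option φ.fin
  root := some φ.root
  label := lab1 (.var p) φ
  succ := fun a => match a with
    | none => Fin.elim0
    | some a => fun i =>
        if φ.succ a i = φ.root then none else some (φ.succ a i)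

-- `snip(φ,p)`: if the root is on a cycle, redirect all incoming edges
-- of the root to a new leaf labeled `p`; otherwise `φ` itself.
open Classical in
noncomputable def snip (φ : Fm) (p : ℕ) : Fm :=
  if φ.RootOnCycle then φ.snipC p else φ

/-- `snip(φ,ψ) := snip(φ,p)[p:ψ]` (for a variable `p` not occurring in `φ`). -/
noncomputable def snipF (φ : Fm) (p : ℕ) (ψ : Fm) : Fm :=
  (φ.snip p).subst1 p ψ

theorem snip_root_ne {φ : Fm} {p : ℕ} (h : φ.RootOnCycle) (hp : ¬ φ.Occurs p) :
    (φ.snip p).label (φ.snip p).root ≠ .var p := by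
  rw [snip, if_pos h]
  exact fun hc => hp ⟨φ.root, hc⟩

/-! ### The transitive closure modality `□•φ := Ϝp.□(φ∧p)` -/

def bslab (φ : Fm) : Option (Option φ.V) → FLab
  | none => .box
  | some none => .and
  | some (some a) => φ.label a

/-- `□•φ := Ϝp.□(φ∧p)`, for `p` not occurring in `φ`: a box-root whose
`∧`-successor returns to the box-root. -/
def boxStar (φ : Fm) : Fm where
  V := Option (Option φ.V)
  fin := finite_option (finite_option φ.fin)
  root := none
  label := bslab φ
  succ := fun a => match a with
    | none => fun _ => some none
    | some none => fun i => if (i : ℕ) = 0 then some (some φ.root) else none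
    | some (some a) => fun i => some (some (φ.succ a i))

/-- `⊡•φ := φ ∧ □•φ`. -/
def boxDotStar (φ : Fm) : Fm := Fm.and φ (boxStar φ)

/-- Finite conjunctions. -/
def bigAnd : List Fm → Fm
  | [] => topFm
  | φ :: l => Fm.and φ (bigAnd l)

/-- Apply a label, as a connective, to arguments. -/
def applyLab : (l : FLab) → (Fin l.ar → Fm) → Fm
  | .top, _ => topFm
  | .bot, _ => botFm
  | .var n, _ => varFm n
  | .neg, f => neg (f 0)
  | .box, f => box (f 0)
  | .and, f => Fm.and (f 0) (f 1)
  | .or, f => Fm.or (f 0) (f 1)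
  | .imp, f => Fm.imp (f 0) (f 1)

/-- First successor (defaulting to `a` itself at leaves). -/
def succ0 (φ : Fm) (a : φ.V) : φ.V :=
  if h : 0 < (φ.label a).ar then φ.succ a ⟨0, h⟩ else a

/-- The subgraph of `φ` generated by `a`. -/
def restrict (φ : Fm) (a : φ.V) : Fm where
  V := {b : φ.V // Relation.ReflTransGen φ.Edge a b}
  fin := by haveI := φ.fin; exact inferInstance
  root := ⟨a, Relation.ReflTransGen.refl⟩
  label := fun b => φ.label b.1
  succ := fun b i => ⟨φ.succ b.1 i, b.2.tail ⟨i, rfl⟩⟩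

/-- A variable not occurring in `φ`. -/
noncomputable def freshVar (φ : Fm) : ℕ := by
  classical
  haveI := φ.fin
  haveI : Fintype φ.V := Fintype.ofFinite _
  exact Finset.univ.sup fun a => match φ.label a with | .var q => q + 1 | _ => 0

/-- `snip(φ,⊤)`. -/
noncomputable def snipTop (φ : Fm) : Fm := φ.snipF φ.freshVar topFm

/-- The list of box-occurrences of `φ`. -/
noncomputable def boxOccList (φ : Fm) : List φ.V := by
  classical
  haveI := φ.fin
  haveI : Fintype φ.V := Fintype.ofFinite _
  exact (Finset.univ.filter fun a => φ.label a = FLab.box).toList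

end Fm

/-! ### Propositional tautologies (as parse trees) -/

inductive PForm : Type
  | var (n : ℕ) | top | bot
  | neg (A : PForm) | and (A B : PForm) | or (A B : PForm) | imp (A B : PForm)

def PForm.eval (v : ℕ → Bool) : PForm → Bool
  | .var n => v n
  | .top => true
  | .bot => false
  | .neg A => !A.eval v
  | .and A B => A.eval v && B.eval v
  | .or A B => A.eval v || B.eval v
  | .imp A B => !A.eval v || B.eval v

/-- Propositional tautology. -/
def PForm.Taut (A : PForm) : Prop := ∀ v, A.eval v = true

/-- Substitution instance of a parse tree by formulas of `𝕃°`. -/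
def PForm.substFm (σ : ℕ → Fm) : PForm → Fm
  | .var n => σ n
  | .top => Fm.topFm
  | .bot => Fm.botFm
  | .neg A => Fm.neg (A.substFm σ)
  | .and A B => Fm.and (A.substFm σ) (B.substFm σ)
  | .or A B => Fm.or (A.substFm σ) (B.substFm σ)
  | .imp A B => Fm.imp (A.substFm σ) (B.substFm σ)

/-! ### Cyclic Henkin Logic -/

/-- Cyclic Henkin Logic `CHL`: modus ponens, necessitation, substitution
instances of propositional tautologies, distribution, bisimilarity, and
Löb's Rule. -/
inductive CHL : Fm → Prop
  | mp {φ ψ : Fm} : CHL (Fm.imp φ ψ) → CHL φ → CHL ψ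
  | nec {φ : Fm} : CHL φ → CHL (Fm.box φ)
  | taut {A : PForm} (σ : ℕ → Fm) : A.Taut → CHL (A.substFm σ)
  | k (φ ψ : Fm) : CHL (Fm.imp (Fm.box (Fm.imp φ ψ)) (Fm.imp (Fm.box φ) (Fm.box ψ)))
  | bisim {φ ψ : Fm} : RGraph.Bisim φ ψ → CHL (Fm.iff φ ψ)
  | lob {φ : Fm} : CHL (Fm.imp (Fm.box φ) φ) → CHL φ

/-- `GL°`: `CHL` plus the axiom scheme `□φ → □□φ`. -/
inductive GLo : Fm → Prop
  | mp {φ ψ : Fm} : GLo (Fm.imp φ ψ) → GLo φ → GLo ψ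
  | nec {φ : Fm} : GLo φ → GLo (Fm.box φ)
  | taut {A : PForm} (σ : ℕ → Fm) : A.Taut → GLo (A.substFm σ)
  | k (φ ψ : Fm) : GLo (Fm.imp (Fm.box (Fm.imp φ ψ)) (Fm.imp (Fm.box φ) (Fm.box ψ)))
  | bisim {φ ψ : Fm} : RGraph.Bisim φ ψ → GLo (Fm.iff φ ψ)
  | lob {φ : Fm} : GLo (Fm.imp (Fm.box φ) φ) → GLo φ
  | four (φ : Fm) : GLo (Fm.imp (Fm.box φ) (Fm.box (Fm.box φ)))

/-- Löb's Logic `GL` on the acyclic formulas. -/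
inductive GLlogic : Fm → Prop
  | mp {φ ψ : Fm} : GLlogic (Fm.imp φ ψ) → GLlogic φ → GLlogic ψ
  | nec {φ : Fm} : GLlogic φ → GLlogic (Fm.box φ)
  | taut {A : PForm} (σ : ℕ → Fm) : (∀ q, (σ q).Acyclic) → A.Taut → GLlogic (A.substFm σ)
  | k (φ ψ : Fm) : φ.Acyclic → ψ.Acyclic →
      GLlogic (Fm.imp (Fm.box (Fm.imp φ ψ)) (Fm.imp (Fm.box φ) (Fm.box ψ)))
  | bisim {φ ψ : Fm} : φ.Acyclic → ψ.Acyclic → RGraph.Bisim φ ψ → GLlogic (Fm.iff φ ψ)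
  | lob {φ : Fm} : φ.Acyclic → GLlogic (Fm.imp (Fm.box φ) φ) → GLlogic φ
  | four (φ : Fm) : φ.Acyclic → GLlogic (Fm.imp (Fm.box φ) (Fm.box (Fm.box φ)))

/-! ### Systems of equations -/

/-- The system `ℰ` (given by `E` on the finite variable set `Q`) is
modalised: its dependency graph is acyclic. -/
def SysModalised (Q : Finset ℕ) (E : ℕ → Fm) : Prop :=
  ∀ q ∈ Q, ¬ Relation.TransGen
      (fun x y => x ∈ Q ∧ y ∈ Q ∧ ¬ (E x).Modalised y) q q

/-- The substitution determined by a solution candidate `F` on `Q`. -/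
def sysSubst (Q : Finset ℕ) (F : ℕ → Fm) : ℕ → Fm :=
  fun q => if q ∈ Q then F q else Fm.varFm q

/-- `F` solves the system `E` on `Q`. -/
def IsSolution (Q : Finset ℕ) (E : ℕ → Fm) (F : ℕ → Fm) : Prop :=
  (∀ q ∈ Q, (F q).WF) ∧
  (∀ q ∈ Q, ∀ q' ∈ Q, ¬ (F q).Occurs q') ∧
  (∀ q ∈ Q, RGraph.Bisim (F q) ((E q).subst (sysSubst Q F)))

/-! ### Local translations -/

/-- A local translation of the formula `φ` into the logic `Λ`. -/
def IsLocalTranslation (Λ : Fm → Prop) (φ : Fm) (T : φ.V → Fm) : Prop :=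
  ∀ a : φ.V, Λ (Fm.iff (T a) (Fm.applyLab (φ.label a) (fun i => T (φ.succ a i))))

-- Substitution determined by a finite assignment.
open Classical in
noncomputable def substOf {ι : Type} (s : ι → ℕ) (ψ : ι → Fm) : ℕ → Fm :=
  fun q => if h : ∃ i, s i = q then ψ h.choose else Fm.varFm q

/-- The characterising equations of the de Jongh–Sambin map `js*`,
defined by course-of-values recursion on the number of cycles and guard
recursion on the box-occurrences on a cycle. -/
def IsJsStar (jsS : (φ : Fm) → φ.V → Fm) : Prop :=
  (∀ (φ : Fm) (a : φ.V), ¬ (φ.label a = .box ∧ φ.OnCycle a) →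
      jsS φ a = Fm.applyLab (φ.label a) (fun i => jsS φ (φ.succ a i))) ∧
  (∀ (φ : Fm) (a : φ.V), φ.label a = .box → φ.OnCycle a →
      jsS φ a = jsS (Fm.snipTop (φ.restrict a)) (Fm.snipTop (φ.restrict a)).root) ∧
  (∀ (φ : Fm) (a : φ.V), (jsS φ a).Acyclic)

/-! ### Auxiliary machinery for `boxStar_GL` -/

namespace BoxStarGL

open Fm

/-- Retraction from `□(φ ∧ □•φ)` onto `□•φ`. -/
def unroll (φ : Fm) : (Fm.box (Fm.and φ (Fm.boxStar φ))).V → (Fm.boxStar φ).V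
  | none => none
  | some none => some none
  | some (some (.inl a)) => some (some a)
  | some (some (.inr x)) => x

theorem bisim_unroll (φ : Fm) :
    RGraph.Bisim (Fm.boxStar φ) (Fm.box (Fm.and φ (Fm.boxStar φ))) := by
  refine ⟨fun a b => unroll φ b = a, fun a b hb => ?_, rfl⟩
  subst hb
  match b with
  | none => exact ⟨rfl, fun i => rfl⟩
  | some none =>
      exact ⟨rfl, fun i => by fin_cases i <;> rfl⟩
  | some (some (.inl a)) => exact ⟨rfl, fun i => rfl⟩
  | some (some (.inr none)) => exact ⟨rfl, fun i => rfl⟩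
  | some (some (.inr (some none))) =>
      exact ⟨rfl, fun i => by fin_cases i <;> rfl⟩
  | some (some (.inr (some (some a)))) => exact ⟨rfl, fun i => rfl⟩

/-- The fixpoint equation `□•φ ↔ □(φ ∧ □•φ)` in CHL. -/
theorem fixpoint (φ : Fm) :
    CHL (Fm.iff (Fm.boxStar φ) (Fm.box (Fm.and φ (Fm.boxStar φ)))) :=
  CHL.bisim (bisim_unroll φ)

/-! ### Propositional toolkit -/

theorem iff_mp {a b : Fm} (h : CHL (Fm.iff a b)) : CHL (Fm.imp a b) :=
  CHL.mp (CHL.taut (A := .imp (.and (.var 0) (.var 1)) (.var 0))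
    (fun n => match n with | 0 => Fm.imp a b | _ => Fm.imp b a)
    (by intro v; cases h0 : v 0 <;> cases h1 : v 1 <;> simp [PForm.eval, h0, h1])) h

theorem iff_mpr {a b : Fm} (h : CHL (Fm.iff a b)) : CHL (Fm.imp b a) :=
  CHL.mp (CHL.taut (A := .imp (.and (.var 0) (.var 1)) (.var 1))
    (fun n => match n with | 0 => Fm.imp a b | _ => Fm.imp b a)
    (by intro v; cases h0 : v 0 <;> cases h1 : v 1 <;> simp [PForm.eval, h0, h1])) h

theorem imp_trans {a b c : Fm} (h1 : CHL (Fm.imp a b)) (h2 : CHL (Fm.imp b c)) :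
    CHL (Fm.imp a c) :=
  CHL.mp (CHL.mp (CHL.taut
      (A := .imp (.imp (.var 0) (.var 1)) (.imp (.imp (.var 1) (.var 2)) (.imp (.var 0) (.var 2))))
      (fun n => match n with | 0 => a | 1 => b | _ => c)
      (by intro v; cases h0 : v 0 <;> cases h1 : v 1 <;> cases h2 : v 2 <;>
          simp [PForm.eval, h0, h1, h2])) h1) h2

theorem box_mono {a b : Fm} (h : CHL (Fm.imp a b)) :
    CHL (Fm.imp (Fm.box a) (Fm.box b)) :=
  CHL.mp (CHL.k a b) (CHL.nec h)

theorem k2 {a b c : Fm} (h : CHL (Fm.imp a (Fm.imp b c))) :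
    CHL (Fm.imp (Fm.box a) (Fm.imp (Fm.box b) (Fm.box c))) :=
  imp_trans (box_mono h) (CHL.k b c)

theorem imp_trans2 {a b c d : Fm} (h1 : CHL (Fm.imp a (Fm.imp b c)))
    (h2 : CHL (Fm.imp c d)) : CHL (Fm.imp a (Fm.imp b d)) :=
  CHL.mp (CHL.mp (CHL.taut
      (A := .imp (.imp (.var 0) (.imp (.var 1) (.var 2)))
            (.imp (.imp (.var 2) (.var 3)) (.imp (.var 0) (.imp (.var 1) (.var 3)))))
      (fun n => match n with | 0 => a | 1 => b | 2 => c | _ => d)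
      (by intro v; cases h0 : v 0 <;> cases h1 : v 1 <;> cases h2 : v 2 <;> cases h3 : v 3 <;>
          simp [PForm.eval, h0, h1, h2, h3])) h1) h2

theorem k3 {a b c d : Fm} (h : CHL (Fm.imp a (Fm.imp b (Fm.imp c d)))) :
    CHL (Fm.imp (Fm.box a) (Fm.imp (Fm.box b) (Fm.imp (Fm.box c) (Fm.box d)))) :=
  imp_trans2 (k2 h) (CHL.k c d)

/-- The key Löb trick used for L3 and L4. -/
theorem lob2 {a b c d : Fm} (h1 : CHL (Fm.imp a b)) (h2 : CHL (Fm.imp d c))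
    (h3 : CHL (Fm.imp b (Fm.imp (Fm.box (Fm.imp a c)) d))) : CHL (Fm.imp a c) := by
  refine CHL.lob ?_
  -- goal: CHL (imp (box (imp a c)) (imp a c))
  -- atoms: 0 = a, 1 = b, 2 = box (imp a c), 3 = d, 4 = c
  refine CHL.mp (CHL.mp (CHL.mp (CHL.taut
    (A := .imp (.imp (.var 0) (.var 1))
          (.imp (.imp (.var 3) (.var 4))
          (.imp (.imp (.var 1) (.imp (.var 2) (.var 3)))
          (.imp (.var 2) (.imp (.var 0) (.var 4))))))
    (fun n => match n with | 0 => a | 1 => b | 2 => Fm.box (Fm.imp a c) | 3 => d | _ => c)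
    ?_) h1) h2) h3
  intro v
  cases h0 : v 0 <;> cases h1 : v 1 <;> cases h2 : v 2 <;> cases h3 : v 3 <;> cases h4 : v 4 <;>
    simp [PForm.eval, h0, h1, h2, h3, h4]

end BoxStarGL

/-- Theorem `loebsmurf`: the modality `□•` satisfies Löb's Logic `GL`
over `CHL`:
(L1) if `CHL ⊢ φ` then `CHL ⊢ □•φ`;
(L2) `CHL ⊢ □•(φ→ψ) → (□•φ → □•ψ)`;
(L3) `CHL ⊢ □•φ → □•□•φ`;
(L4) `CHL ⊢ □•(□•φ → φ) → □•φ`. -/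
theorem boxStar_GL (φ ψ : Fm) (hφ : φ.WF) (hψ : ψ.WF) :
    (CHL φ → CHL (Fm.boxStar φ)) ∧
    CHL (Fm.imp (Fm.boxStar (Fm.imp φ ψ)) (Fm.imp (Fm.boxStar φ) (Fm.boxStar ψ))) ∧
    CHL (Fm.imp (Fm.boxStar φ) (Fm.boxStar (Fm.boxStar φ))) ∧
    CHL (Fm.imp (Fm.boxStar (Fm.imp (Fm.boxStar φ) φ)) (Fm.boxStar φ)) := by
  open BoxStarGL in
  refine ⟨?_, ?_, ?_, ?_⟩
  · -- L1
    intro h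
    set B := Fm.boxStar φ with hB
    have step1 : CHL (Fm.imp B (Fm.and φ B)) :=
      CHL.mp (CHL.taut (A := .imp (.var 0) (.imp (.var 1) (.and (.var 0) (.var 1))))
        (fun n => match n with | 0 => φ | _ => B)
        (by intro v; cases h0 : v 0 <;> cases h1 : v 1 <;> simp [PForm.eval, h0, h1])) h
    exact CHL.lob (imp_trans (box_mono step1) (iff_mpr (fixpoint φ)))
  · -- L2
    set A := Fm.boxStar (Fm.imp φ ψ) with hA
    set B := Fm.boxStar φ with hB
    set C := Fm.boxStar ψ with hC
    have fA : CHL (Fm.imp A (Fm.box (Fm.and (Fm.imp φ ψ) A))) := iff_mp (fixpoint _)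
    have fB : CHL (Fm.imp B (Fm.box (Fm.and φ B))) := iff_mp (fixpoint _)
    have fC : CHL (Fm.imp (Fm.box (Fm.and ψ C)) C) := iff_mpr (fixpoint _)
    set χ := Fm.imp A (Fm.imp B C) with hχ
    have T : CHL (Fm.imp (Fm.and (Fm.imp φ ψ) A) (Fm.imp (Fm.and φ B)
        (Fm.imp χ (Fm.and ψ C)))) :=
      CHL.taut (A := .imp (.and (.imp (.var 0) (.var 1)) (.var 2))
          (.imp (.and (.var 0) (.var 3))
          (.imp (.imp (.var 2) (.imp (.var 3) (.var 4))) (.and (.var 1) (.var 4)))))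
        (fun n => match n with | 0 => φ | 1 => ψ | 2 => A | 3 => B | _ => C)
        (by intro v
            cases h0 : v 0 <;> cases h1 : v 1 <;> cases h2 : v 2 <;> cases h3 : v 3 <;>
              cases h4 : v 4 <;> simp [PForm.eval, h0, h1, h2, h3, h4])
    have KT := k3 T
    -- combine: atoms 0=A 1=□((φ→ψ)∧A) 2=B 3=□(φ∧B) 4=□χ 5=□(ψ∧C) 6=C
    refine CHL.lob (CHL.mp (CHL.mp (CHL.mp (CHL.mp (CHL.taut
      (A := .imp (.imp (.var 0) (.var 1))
            (.imp (.imp (.var 2) (.var 3))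
            (.imp (.imp (.var 5) (.var 6))
            (.imp (.imp (.var 1) (.imp (.var 3) (.imp (.var 4) (.var 5))))
            (.imp (.var 4) (.imp (.var 0) (.imp (.var 2) (.var 6))))))))
      (fun n => match n with
        | 0 => A | 1 => Fm.box (Fm.and (Fm.imp φ ψ) A) | 2 => B | 3 => Fm.box (Fm.and φ B)
        | 4 => Fm.box χ | 5 => Fm.box (Fm.and ψ C) | _ => C)
      ?_) fA) fB) fC) KT)
    intro v
    cases h0 : v 0 <;> cases h1 : v 1 <;> cases h2 : v 2 <;> cases h3 : v 3 <;>
      cases h4 : v 4 <;> cases h5 : v 5 <;> cases h6 : v 6 <;>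
        simp [PForm.eval, h0, h1, h2, h3, h4, h5, h6]
  · -- L3
    set B := Fm.boxStar φ with hB
    set D := Fm.boxStar B with hD
    have fB : CHL (Fm.imp B (Fm.box (Fm.and φ B))) := iff_mp (fixpoint _)
    have fD : CHL (Fm.imp (Fm.box (Fm.and B D)) D) := iff_mpr (fixpoint _)
    refine lob2 fB fD (k2 ?_)
    exact CHL.taut (A := .imp (.and (.var 0) (.var 1))
        (.imp (.imp (.var 1) (.var 2)) (.and (.var 1) (.var 2))))
      (fun n => match n with | 0 => φ | 1 => B | _ => D)
      (by intro v; cases h0 : v 0 <;> cases h1 : v 1 <;> cases h2 : v 2 <;>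
          simp [PForm.eval, h0, h1, h2])
  · -- L4
    set B := Fm.boxStar φ with hB
    set E := Fm.boxStar (Fm.imp B φ) with hE
    have fE : CHL (Fm.imp E (Fm.box (Fm.and (Fm.imp B φ) E))) := iff_mp (fixpoint _)
    have fB : CHL (Fm.imp (Fm.box (Fm.and φ B)) B) := iff_mpr (fixpoint _)
    refine lob2 fE fB (k2 ?_)
    exact CHL.taut (A := .imp (.and (.imp (.var 0) (.var 1)) (.var 2))
        (.imp (.imp (.var 2) (.var 0)) (.and (.var 1) (.var 0))))
      (fun n => match n with | 0 => B | 1 => φ | _ => E)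
      (by intro v; cases h0 : v 0 <;> cases h1 : v 1 <;> cases h2 : v 2 <;>
          simp [PForm.eval, h0, h1, h2])
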